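/- Let n ≥ 3 and F = X_1^{a_1} ⋯ X_n^{a_n}(X_1^{b_1} ⋯ X_{n-1}^{b_{n-1}} − X_n^{b_n}) with b_1 + ⋯ + b_{n-1} = b_n > 0, all b_i > 0, and q = ⌊(a_n+1)/b_n⌋. Then x_i^{a_i+b_i+1} ∈ Ann_R(F) for each 1 ≤ i ≤ n−1, and moreover these monomials are part of a minimal system of generators of Ann_R(F). -/

import Mathlib

open MvPolynomial

variable {K : Type*} [Field K] {n : ℕ}

/-- Contraction action of `R = K[x_1,…,x_n]` on the divided power algebra
`S = K[X_1,…,X_n]`: on monomials, `x^a ∘ X^b = X^(b-a)` if `a ≤ b` and `0` otherwise,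
extended bilinearly. -/
noncomputable def contract (f F : MvPolynomial (Fin n) K) : MvPolynomial (Fin n) K :=
  ∑ a ∈ f.support, ∑ b ∈ F.support,
    if a ≤ b then monomial (b - a) (coeff a f * coeff b F) else 0

lemma contract_zero_left (F : MvPolynomial (Fin n) K) : contract 0 F = 0 := by
  simp [contract]

lemma contract_add_left (f g F : MvPolynomial (Fin n) K) :
    contract (f + g) F = contract f F + contract g F := by
  classical
  have key : ∀ (p : MvPolynomial (Fin n) K) (s : Finset (Fin n →₀ ℕ)), p.support ⊆ s →
      contract p F = ∑ a ∈ s, ∑ b ∈ F.support,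
        if a ≤ b then monomial (b - a) (coeff a p * coeff b F) else 0 := by
    intro p s hs
    refine Finset.sum_subset hs ?_
    intro a _ ha
    rw [MvPolynomial.notMem_support_iff] at ha
    simp [ha]
  rw [key f (f.support ∪ g.support) Finset.subset_union_left,
      key g (f.support ∪ g.support) Finset.subset_union_right,
      key (f + g) (f.support ∪ g.support) (fun a ha => support_add ha),
      ← Finset.sum_add_distrib]
  refine Finset.sum_congr rfl fun a _ => ?_
  rw [← Finset.sum_add_distrib]
  refine Finset.sum_congr rfl fun b _ => ?_
  split_ifs with h
  · rw [coeff_add, add_mul, map_add (monomial (b - a)) _ _]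
  · rw [add_zero]

/-- The annihilator of `F` under the contraction action, as an ideal of `R`;
its members are exactly the `f` with `f ∘ F = 0`. -/
noncomputable def annIdeal (F : MvPolynomial (Fin n) K) : Ideal (MvPolynomial (Fin n) K) where
  carrier := {f | ∀ g, contract (g * f) F = 0}
  zero_mem' := fun g => by rw [mul_zero, contract_zero_left]
  add_mem' := fun {p q} hp hq g => by
    rw [mul_add, contract_add_left, hp g, hq g, add_zero]
  smul_mem' := fun c p hp g => by
    rw [smul_eq_mul, ← mul_assoc]; exact hp (g * c)

/-- Complete intersection ideal: generated by a regular sequence of length `c`. -/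
def IsCI (c : ℕ) {R : Type*} [CommRing R] (I : Ideal R) : Prop :=
  ∃ gs : List R, gs.length = c ∧ RingTheory.Sequence.IsRegular R gs ∧
    Ideal.span {x | x ∈ gs} = I

/-- The degree-`i` component of `A_F = R/Ann_R(F)`. -/
noncomputable def quotComponent (F : MvPolynomial (Fin n) K) (i : ℕ) :
    Submodule K ((MvPolynomial (Fin n) K) ⧸ annIdeal F) :=
  (homogeneousSubmodule (Fin n) K i).map (Ideal.Quotient.mkₐ K (annIdeal F)).toLinearMap

/-- The strong Lefschetz property for a graded algebra given by the family `𝒜` of its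
graded components: some linear form `ℓ` has all multiplication maps
`×ℓ^k : 𝒜_i → 𝒜_{i+k}` of maximal rank (injective or surjective). -/
def SLP (K : Type*) {A : Type*} [CommSemiring K] [CommRing A] [Algebra K A]
    (𝒜 : ℕ → Submodule K A) : Prop :=
  ∃ ℓ ∈ 𝒜 1, ∀ i k : ℕ, 0 < k →
    (∀ x ∈ 𝒜 i, ℓ ^ k * x = 0 → x = 0) ∨ (∀ y ∈ 𝒜 (i + k), ∃ x ∈ 𝒜 i, ℓ ^ k * x = y)


lemma mem_annIdeal_iff {F f : MvPolynomial (Fin n) K} :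
    f ∈ annIdeal F ↔ ∀ g, contract (g * f) F = 0 := Iff.rfl

lemma coeff_contract (f F : MvPolynomial (Fin n) K) (c : Fin n →₀ ℕ) :
    coeff c (contract f F) = ∑ a ∈ f.support, coeff a f * coeff (a + c) F := by
  classical
  unfold contract
  rw [coeff_sum]
  refine Finset.sum_congr rfl fun v _ => ?_
  rw [coeff_sum]
  have key : ∀ w ∈ F.support,
      coeff c (if v ≤ w then monomial (w - v) (coeff v f * coeff w F) else 0)
        = if w = v + c then coeff v f * coeff w F else 0 := by
    intro w _
    split_ifs with h1 h2 h2
    · rw [coeff_monomial, if_pos]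
      subst h2; exact add_tsub_cancel_left v c
    · rw [coeff_monomial, if_neg]
      intro h; exact h2 (by rw [← h, add_tsub_cancel_of_le h1])
    · exact absurd (h2 ▸ le_self_add) h1
    · exact coeff_zero c
  rw [Finset.sum_congr rfl key, Finset.sum_ite_eq' F.support (v + c)
    (fun w => coeff v f * coeff w F)]
  split_ifs with h
  · rfl
  · rw [notMem_support_iff.mp h, mul_zero]

lemma contract_zero_right (f : MvPolynomial (Fin n) K) : contract f 0 = 0 := by
  ext c; simp [coeff_contract]

lemma contract_add_right (f F G : MvPolynomial (Fin n) K) :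
    contract f (F + G) = contract f F + contract f G := by
  ext c
  simp [coeff_contract, coeff_add, mul_add, Finset.sum_add_distrib]

lemma coeff_contract_X (i : Fin n) (f : MvPolynomial (Fin n) K) (c : Fin n →₀ ℕ) :
    coeff c (contract (X i) f) = coeff (Finsupp.single i 1 + c) f := by
  rw [coeff_contract, support_X, Finset.sum_singleton, coeff_X, if_pos rfl, one_mul]

lemma contract_X_mul_X (i : Fin n) (g : MvPolynomial (Fin n) K) :
    contract (X i) (X i * g) = g := by
  ext c
  rw [coeff_contract_X, coeff_X_mul]

lemma prod_X_pow (s : Finset (Fin n)) (f : Fin n → ℕ) :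
    (∏ j ∈ s, (X j : MvPolynomial (Fin n) K) ^ f j)
      = monomial (∑ j ∈ s, Finsupp.single j (f j)) 1 := by
  classical
  induction s using Finset.induction with
  | empty => simp
  | insert j s h ih =>
      rw [Finset.prod_insert h, Finset.sum_insert h, ih, X_pow_eq_monomial, monomial_mul, one_mul]

lemma sum_single_apply (s : Finset (Fin n)) (f : Fin n → ℕ) (j : Fin n) :
    (∑ k ∈ s, Finsupp.single k (f k)) j = if j ∈ s then f j else 0 := by
  classical
  rw [Finsupp.finset_sum_apply]
  simp [Finsupp.single_apply, Finset.sum_ite_eq']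

/-- Each `x_i^{a_i+b_i+1}` (for `1 ≤ i ≤ n-1`) lies in `Ann_R(F)`
and these monomials are part of a minimal system of generators of `Ann_R(F)`: none of them lies
in `m·Ann_R(F) + (the ideal generated by the others)`, where `m` is the irrelevant maximal ideal. -/
theorem stmt9 [CharZero K] {m : ℕ} (hn : 3 ≤ m + 1)
    (a b : Fin (m + 1) → ℕ) (hb : ∀ i, 0 < b i)
    (hne : (Finset.Iio (Fin.last m)).Nonempty)
    (hsum : ∑ i ∈ Finset.Iio (Fin.last m), b i = b (Fin.last m))
    (F : MvPolynomial (Fin (m + 1)) K)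
    (hF : F = (∏ i, (X i : MvPolynomial (Fin (m + 1)) K) ^ a i) *
      ((∏ i ∈ Finset.Iio (Fin.last m), (X i : MvPolynomial (Fin (m + 1)) K) ^ b i)
        - X (Fin.last m) ^ b (Fin.last m)))
    (q : ℕ) (hq : q = (a (Fin.last m) + 1) / b (Fin.last m))
    :
    ∀ i ∈ Finset.Iio (Fin.last m),
      (X i : MvPolynomial (Fin (m + 1)) K) ^ (a i + b i + 1) ∈ annIdeal F ∧
      (X i : MvPolynomial (Fin (m + 1)) K) ^ (a i + b i + 1) ∉
        Ideal.span (Set.range (X : Fin (m + 1) → MvPolynomial (Fin (m + 1)) K)) * annIdeal F ⊔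
          Ideal.span ((fun j => (X j : MvPolynomial (Fin (m + 1)) K) ^ (a j + b j + 1)) ''
            {j | j ∈ Finset.Iio (Fin.last m) ∧ j ≠ i}) := by
  classical
  intro i hi
  have hilt : i < Fin.last m := Finset.mem_Iio.mp hi
  have hine : i ≠ Fin.last m := Fin.ne_of_lt hilt
  obtain ⟨e1, he1⟩ : ∃ e1 : Fin (m+1) →₀ ℕ,
      ∀ j, e1 j = if j = Fin.last m then a j else a j + b j :=
    ⟨Finsupp.equivFunOnFinite.symm _, fun j => rfl⟩
  obtain ⟨e2, he2⟩ : ∃ e2 : Fin (m+1) →₀ ℕ,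
      ∀ j, e2 j = if j = Fin.last m then a j + b j else a j :=
    ⟨Finsupp.equivFunOnFinite.symm _, fun j => rfl⟩
  obtain ⟨m0, hm0⟩ : ∃ m0 : Fin (m+1) →₀ ℕ,
      ∀ j, m0 j = if j = i then 0 else if j = Fin.last m then a j else a j + b j :=
    ⟨Finsupp.equivFunOnFinite.symm _, fun j => rfl⟩
  -- the polynomial F as difference of two monomials
  have hFeq : F = monomial e1 1 - monomial e2 1 := by
    have hs1 : (∑ j, Finsupp.single j (a j)) + ∑ j ∈ Finset.Iio (Fin.last m),
        Finsupp.single j (b j) = e1 := by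
      ext j
      rw [Finsupp.add_apply, sum_single_apply, sum_single_apply, he1 j]
      rcases eq_or_ne j (Fin.last m) with rfl | hj
      · rw [if_pos (Finset.mem_univ _), if_neg (fun h => lt_irrefl _ (Finset.mem_Iio.mp h)), if_pos rfl, add_zero]
      · rw [if_pos (Finset.mem_univ _),
          if_pos (Finset.mem_Iio.mpr (Fin.lt_last_iff_ne_last.mpr hj)), if_neg hj]
    have hs2 : (∑ j, Finsupp.single j (a j)) + Finsupp.single (Fin.last m) (b (Fin.last m))
        = e2 := by
      ext j
      rw [Finsupp.add_apply, sum_single_apply, Finsupp.single_apply, he2 j]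
      rcases eq_or_ne j (Fin.last m) with rfl | hj
      · rw [if_pos (Finset.mem_univ _), if_pos rfl, if_pos rfl]
      · rw [if_pos (Finset.mem_univ _), if_neg (Ne.symm hj), if_neg hj, add_zero]
    rw [hF, _root_.prod_X_pow, _root_.prod_X_pow, X_pow_eq_monomial, mul_sub, monomial_mul, monomial_mul,
      one_mul, hs1, hs2]
  have hcF : ∀ v, coeff v F = (if e1 = v then (1:K) else 0) - (if e2 = v then 1 else 0) := by
    intro v
    rw [hFeq, coeff_sub, coeff_monomial, coeff_monomial]
  have hne12 : e1 ≠ e2 := by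
    intro h
    have h' := DFunLike.congr_fun h i
    rw [he1 i, he2 i, if_neg hine, if_neg hine] at h'
    have := hb i; omega
  -- Part 1: membership in the annihilator
  have hmem : (X i : MvPolynomial (Fin (m+1)) K) ^ (a i + b i + 1) ∈ annIdeal F := by
    rw [mem_annIdeal_iff]
    intro g
    ext c
    rw [coeff_contract, coeff_zero]
    refine Finset.sum_eq_zero fun v hv => ?_
    rw [mem_support_iff] at hv
    have hvi : a i + b i + 1 ≤ v i := by
      by_contra hlt
      apply hv
      rw [X_pow_eq_monomial, coeff_mul_monomial', if_neg]
      rw [Finsupp.single_le_iff]; omega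
    have h1 : e1 ≠ v + c := by
      intro h
      have h' := DFunLike.congr_fun h i
      rw [he1 i, if_neg hine, Finsupp.add_apply] at h'
      omega
    have h2 : e2 ≠ v + c := by
      intro h
      have h' := DFunLike.congr_fun h i
      rw [he2 i, if_neg hine, Finsupp.add_apply] at h'
      omega
    rw [hcF, if_neg h1, if_neg h2, sub_zero, mul_zero]
  refine ⟨hmem, fun hcon => ?_⟩
  -- the functional Φ f = coeff m0 (contract (contract (X i) f) F)
  have hΦ0 : coeff m0 (contract (contract (X i) (0 : MvPolynomial (Fin (m+1)) K)) F) = 0 := by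
    rw [contract_zero_right, contract_zero_left, coeff_zero]
  have hΦadd : ∀ x y : MvPolynomial (Fin (m+1)) K,
      coeff m0 (contract (contract (X i) (x + y)) F)
        = coeff m0 (contract (contract (X i) x) F)
          + coeff m0 (contract (contract (X i) y) F) := by
    intro x y
    rw [contract_add_right, contract_add_left, coeff_add]
  -- an auxiliary index j0 < last, j0 ≠ i
  obtain ⟨j0, hj0lt, hj0i⟩ : ∃ j0 : Fin (m+1), j0 ≠ Fin.last m ∧ j0 ≠ i := by
    rcases eq_or_ne i ⟨0, by omega⟩ with h | h
    · refine ⟨⟨1, by omega⟩, ?_, ?_⟩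
      · intro hc
        have := congrArg Fin.val hc
        rw [Fin.val_last] at this
        simp at this; omega
      · rw [h]; intro hc
        have := congrArg Fin.val hc
        simp at this
    · refine ⟨⟨0, by omega⟩, ?_, fun hc => h hc.symm⟩
      intro hc
      have := congrArg Fin.val hc
      rw [Fin.val_last] at this
      simp at this; omega
  -- main vanishing lemma
  have hV : ∀ k : Fin (m+1), k ≠ i → ∀ f : MvPolynomial (Fin (m+1)) K,
      (∀ v : Fin (m+1) →₀ ℕ, coeff v f ≠ 0 → 1 ≤ v k) →
      coeff m0 (contract (contract (X i) f) F) = 0 := by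
    intro k hk f hf
    rw [coeff_contract]
    refine Finset.sum_eq_zero fun v hv => ?_
    rw [mem_support_iff, coeff_contract_X] at hv
    have hvk : 1 ≤ v k := by
      have h' := hf _ hv
      rwa [Finsupp.add_apply, Finsupp.single_apply, if_neg (Ne.symm hk), zero_add] at h'
    have h1 : e1 ≠ v + m0 := by
      intro h
      have h' := DFunLike.congr_fun h k
      rw [he1 k, Finsupp.add_apply, hm0 k, if_neg hk] at h'
      split_ifs at h' <;> omega
    have h2 : e2 ≠ v + m0 := by
      intro h
      have h' := DFunLike.congr_fun h j0
      rw [he2 j0, Finsupp.add_apply, hm0 j0, if_neg hj0i, if_neg hj0lt, if_neg hj0lt] at h'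
      have := hb j0; omega
    rw [hcF, if_neg h1, if_neg h2, sub_zero, mul_zero]
  -- Φ vanishes on X k * g for g in the annihilator
  have hXk : ∀ g ∈ annIdeal F, ∀ k : Fin (m+1),
      coeff m0 (contract (contract (X i) (X k * g)) F) = 0 := by
    intro g hg k
    rcases eq_or_ne k i with rfl | hk
    · rw [contract_X_mul_X]
      have h' := (mem_annIdeal_iff.mp hg) 1
      rw [one_mul] at h'
      rw [h', coeff_zero]
    · refine hV k hk _ fun v hvne => ?_
      by_contra hlt
      apply hvne
      rw [coeff_X_mul', if_neg]
      rw [Finsupp.mem_support_iff]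
      omega
  -- Φ vanishes on m * Ann
  have hP : ∀ p ∈ Ideal.span (Set.range (X : Fin (m+1) → MvPolynomial (Fin (m+1)) K)) *
      annIdeal F, coeff m0 (contract (contract (X i) p) F) = 0 := by
    intro p hp
    refine Submodule.mul_induction_on hp ?_ ?_
    · intro r hr g hg
      refine Submodule.span_induction
        (p := fun r _ => ∀ g ∈ annIdeal F,
          coeff m0 (contract (contract (X i) (r * g)) F) = 0) ?_ ?_ ?_ ?_ hr g hg
      · rintro x ⟨k, rfl⟩ g hg
        exact hXk g hg k
      · intro g hg
        rw [zero_mul]; exact hΦ0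
      · intro x y hx hy ihx ihy g hg
        rw [add_mul, hΦadd, ihx g hg, ihy g hg, add_zero]
      · intro c x hx ih g hg
        rw [smul_eq_mul, show c * x * g = x * (c * g) by ring]
        exact ih (c * g) (Ideal.mul_mem_left _ c hg)
    · intro x y hx hy
      rw [hΦadd, hx, hy, add_zero]
  -- Φ vanishes on the span of the other generators
  have hJ : ∀ s ∈ Ideal.span ((fun j => (X j : MvPolynomial (Fin (m + 1)) K) ^ (a j + b j + 1)) ''
      {j | j ∈ Finset.Iio (Fin.last m) ∧ j ≠ i}),
      coeff m0 (contract (contract (X i) s) F) = 0 := by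
    intro s hs
    have key : ∀ h : MvPolynomial (Fin (m+1)) K,
        coeff m0 (contract (contract (X i) (h * s)) F) = 0 := by
      refine Submodule.span_induction
        (p := fun s _ => ∀ h : MvPolynomial (Fin (m+1)) K,
          coeff m0 (contract (contract (X i) (h * s)) F) = 0) ?_ ?_ ?_ ?_ hs
      · rintro x ⟨j, ⟨hjIio, hji⟩, rfl⟩ h
        refine hV j hji _ fun v hvne => ?_
        have hvne' : coeff v (h * X j ^ (a j + b j + 1)) ≠ 0 := hvne
        by_contra hlt
        apply hvne'
        rw [X_pow_eq_monomial, coeff_mul_monomial', if_neg]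
        rw [Finsupp.single_le_iff]; omega
      · intro h; rw [mul_zero]; exact hΦ0
      · intro x y hx hy ihx ihy h
        rw [mul_add, hΦadd, ihx h, ihy h, add_zero]
      · intro c x hx ih h
        rw [smul_eq_mul, show h * (c * x) = (h * c) * x by ring]
        exact ih (h * c)
    have h' := key 1
    rwa [one_mul] at h'
  -- Φ of the generator itself is 1
  have hTop : coeff m0 (contract (contract (X i)
      ((X i : MvPolynomial (Fin (m+1)) K) ^ (a i + b i + 1))) F) = 1 := by
    have hpow : (X i : MvPolynomial (Fin (m+1)) K) ^ (a i + b i + 1)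
        = X i * X i ^ (a i + b i) := by
      rw [pow_succ, mul_comm]
    rw [hpow, contract_X_mul_X, coeff_contract, support_X_pow, Finset.sum_singleton]
    have hco : coeff (Finsupp.single i (a i + b i))
        ((X i : MvPolynomial (Fin (m+1)) K) ^ (a i + b i)) = 1 := by
      rw [coeff_X_pow, if_pos rfl]
    rw [hco, one_mul]
    have he : Finsupp.single i (a i + b i) + m0 = e1 := by
      ext j
      rcases eq_or_ne j i with rfl | hj
      · simp [Finsupp.single_apply, hm0, he1, hine]
      · simp [Finsupp.single_apply, hm0, he1, hj, Ne.symm hj]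
    rw [he, hcF, if_pos rfl, if_neg (fun h => hne12 h.symm), sub_zero]
  rw [Submodule.mem_sup] at hcon
  obtain ⟨p, hp, s, hs, hps⟩ := hcon
  have hfin := hTop
  rw [← hps, hΦadd, hP p hp, hJ s hs, add_zero] at hfin
  exact zero_ne_one hfin
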